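/- Let β be a Parry number with Parry polynomial n*_β and minimal polynomial P_β. If χ ∈ (0,1) is a real root of n*_β with P_β(χ) ≠ 0, then the minimal polynomial of χ is non-reciprocal; equivalently, no reciprocal irreducible factor of n*_β other than P_β has a root in the open interval (0,1). -/
import Mathlib


open Polynomial

noncomputable section

/-- Iterates `T_β^j(1)` of the beta-transformation `T_β(x) = βx - ⌊βx⌋` at `1`. -/
def Titer (β : ℝ) : ℕ → ℝ
  | 0 => 1
  | j + 1 => Int.fract (β * Titer β j)

/-- The digits `t_i = ⌊β · T_β^{i-1}(1)⌋` for `i ≥ 1` (junk value `0` at `i = 0`). -/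
def tdigit (β : ℝ) : ℕ → ℤ
  | 0 => 0
  | i + 1 => ⌊β * Titer β i⌋

def useq (β x : ℝ) : ℕ → ℝ
  | 0 => 1
  | k + 1 => x * useq β x k - tdigit β (k + 1)

lemma Titer_nonneg (β : ℝ) (j : ℕ) : 0 ≤ Titer β j := by
  cases j with
  | zero => norm_num [Titer]
  | succ n => exact Int.fract_nonneg _

lemma Titer_le_one (β : ℝ) (j : ℕ) : Titer β j ≤ 1 := by
  cases j with
  | zero => norm_num [Titer]
  | succ n => exact (Int.fract_lt_one _).le

lemma tdigit_nonneg {β : ℝ} (hβ : 0 < β) (i : ℕ) : 0 ≤ tdigit β i := by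
  cases i with
  | zero => simp [tdigit]
  | succ n => exact Int.floor_nonneg.mpr (mul_nonneg hβ.le (Titer_nonneg β n))

lemma one_le_tdigit_one {β : ℝ} (hβ : 1 < β) : 1 ≤ tdigit β 1 := by
  show (1 : ℤ) ≤ ⌊β * Titer β 0⌋
  rw [show Titer β 0 = 1 from rfl, mul_one]
  exact Int.le_floor.mpr (by exact_mod_cast hβ.le)

lemma Titer_succ (β : ℝ) (j : ℕ) :
    Titer β (j + 1) = β * Titer β j - tdigit β (j + 1) := by
  show Int.fract _ = _
  rw [Int.fract]
  rfl

lemma useq_eq (β x : ℝ) : ∀ k, useq β x k =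
    x ^ k - ∑ i ∈ Finset.Icc 1 k, (tdigit β i : ℝ) * x ^ (k - i)
  | 0 => by simp [useq]
  | k + 1 => by
    rw [show useq β x (k + 1) = x * useq β x k - tdigit β (k + 1) from rfl, useq_eq β x k]
    rw [Finset.sum_Icc_succ_top (by omega : 1 ≤ k + 1)]
    have hs : ∑ i ∈ Finset.Icc 1 k, (tdigit β i : ℝ) * x ^ (k + 1 - i)
        = x * ∑ i ∈ Finset.Icc 1 k, (tdigit β i : ℝ) * x ^ (k - i) := by
      rw [Finset.mul_sum]
      refine Finset.sum_congr rfl fun i hi => ?_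
      obtain ⟨h1, h2⟩ := Finset.mem_Icc.mp hi
      rw [show k + 1 - i = (k - i) + 1 by omega, pow_succ]
      ring
    rw [hs]
    simp
    ring

lemma Titer_eq_useq (β : ℝ) : ∀ j, Titer β j = useq β β j
  | 0 => rfl
  | j + 1 => by
    rw [Titer_succ, Titer_eq_useq β j]
    rfl

lemma aeval_parrysum (β x : ℝ) (k : ℕ) :
    (aeval x) ((X : ℤ[X]) ^ k - ∑ i ∈ Finset.Icc 1 k, C (tdigit β i) * X ^ (k - i))
      = useq β x k := by
  rw [useq_eq]
  simp [eq_intCast]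

lemma aeval_simpleParry (β x : ℝ) (m : ℕ) :
    (aeval x) ((X : ℤ[X]) ^ m - ∑ i ∈ Finset.Icc 1 m, C (tdigit β i) * X ^ (m - i))
      = useq β x m :=
  aeval_parrysum β x m

lemma aeval_nonsimpleParry (β x : ℝ) (m p : ℕ) :
    (aeval x) ((X : ℤ[X]) ^ (m + p + 1)
        - ∑ i ∈ Finset.Icc 1 (m + p + 1), C (tdigit β i) * X ^ (m + p + 1 - i)
        - X ^ m + ∑ i ∈ Finset.Icc 1 m, C (tdigit β i) * X ^ (m - i))
      = useq β x (m + p + 1) - useq β x m := by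
  have h : ((X : ℤ[X]) ^ (m + p + 1)
        - ∑ i ∈ Finset.Icc 1 (m + p + 1), C (tdigit β i) * X ^ (m + p + 1 - i)
        - X ^ m + ∑ i ∈ Finset.Icc 1 m, C (tdigit β i) * X ^ (m - i))
      = ((X : ℤ[X]) ^ (m + p + 1)
          - ∑ i ∈ Finset.Icc 1 (m + p + 1), C (tdigit β i) * X ^ (m + p + 1 - i))
        - ((X : ℤ[X]) ^ m - ∑ i ∈ Finset.Icc 1 m, C (tdigit β i) * X ^ (m - i)) := by
    ring
  rw [h, map_sub, aeval_parrysum, aeval_parrysum]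

lemma key_identity (β x : ℝ) (j : ℕ) :
    useq β x j * β ^ j = Titer β j * x ^ j
      + ∑ i ∈ Finset.Icc 1 j, (tdigit β i : ℝ) * (x * β) ^ (j - i) * (x ^ i - β ^ i) := by
  have hterm : ∀ i ∈ Finset.Icc 1 j,
      (tdigit β i : ℝ) * (x * β) ^ (j - i) * (x ^ i - β ^ i)
        = (tdigit β i : ℝ) * β ^ (j - i) * x ^ j - (tdigit β i : ℝ) * x ^ (j - i) * β ^ j := by
    intro i hi
    obtain ⟨h1, h2⟩ := Finset.mem_Icc.mp hi
    have hx : x ^ (j - i) * x ^ i = x ^ j := by rw [← pow_add]; congr 1; omega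
    have hb : β ^ (j - i) * β ^ i = β ^ j := by rw [← pow_add]; congr 1; omega
    have hm : (x * β) ^ (j - i) = x ^ (j - i) * β ^ (j - i) := mul_pow _ _ _
    rw [hm]
    linear_combination ((tdigit β i : ℝ) * β ^ (j - i)) * hx - ((tdigit β i : ℝ) * x ^ (j - i)) * hb
  rw [Finset.sum_congr rfl hterm, Finset.sum_sub_distrib, ← Finset.sum_mul, ← Finset.sum_mul,
    useq_eq, Titer_eq_useq, useq_eq]
  ring

lemma grow_gt {β x : ℝ} (hβ : 1 < β) (hxb : β < x) (j : ℕ) :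
    (tdigit β 1 : ℝ) * (x - β) * x ^ j ≤ useq β x (j + 1) * β := by
  have hb0 : (0 : ℝ) < β := by linarith
  have hx0 : (0 : ℝ) < x := by linarith
  have hid := key_identity β x (j + 1)
  have h1mem : 1 ∈ Finset.Icc 1 (j + 1) := Finset.mem_Icc.mpr ⟨le_refl _, by omega⟩
  have hsplit : (tdigit β 1 : ℝ) * (x * β) ^ (j + 1 - 1) * (x ^ 1 - β ^ 1)
      + ∑ i ∈ (Finset.Icc 1 (j + 1)).erase 1,
          (tdigit β i : ℝ) * (x * β) ^ (j + 1 - i) * (x ^ i - β ^ i)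
      = ∑ i ∈ Finset.Icc 1 (j + 1),
          (tdigit β i : ℝ) * (x * β) ^ (j + 1 - i) * (x ^ i - β ^ i) :=
    Finset.add_sum_erase (Finset.Icc 1 (j + 1))
      (fun i => (tdigit β i : ℝ) * (x * β) ^ (j + 1 - i) * (x ^ i - β ^ i)) h1mem
  have herase : 0 ≤ ∑ i ∈ (Finset.Icc 1 (j + 1)).erase 1,
      (tdigit β i : ℝ) * (x * β) ^ (j + 1 - i) * (x ^ i - β ^ i) := by
    refine Finset.sum_nonneg fun i hi => ?_
    have h1 : (0 : ℝ) ≤ (tdigit β i : ℝ) := by exact_mod_cast tdigit_nonneg hb0 i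
    have h2 : (0 : ℝ) ≤ (x * β) ^ (j + 1 - i) := by positivity
    have h3 : β ^ i ≤ x ^ i := pow_le_pow_left₀ hb0.le hxb.le i
    have h4 : (0:ℝ) ≤ x ^ i - β ^ i := by linarith
    positivity
  have hT : 0 ≤ Titer β (j + 1) * x ^ (j + 1) :=
    mul_nonneg (Titer_nonneg β _) (by positivity)
  have hf1 : (tdigit β 1 : ℝ) * (x * β) ^ (j + 1 - 1) * (x ^ 1 - β ^ 1)
      = (tdigit β 1 : ℝ) * (x - β) * x ^ j * β ^ j := by
    simp only [Nat.add_sub_cancel, pow_one, mul_pow]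
    ring
  have hmain : (tdigit β 1 : ℝ) * (x - β) * x ^ j * β ^ j ≤ useq β x (j + 1) * β ^ (j + 1) := by
    rw [hid, ← hsplit, hf1]
    linarith
  have hpow : useq β x (j + 1) * β ^ (j + 1) = useq β x (j + 1) * β * β ^ j := by
    rw [pow_succ]; ring
  rw [hpow] at hmain
  exact le_of_mul_le_mul_right hmain (pow_pos hb0 j)

lemma grow_lt {β x : ℝ} (hβ : 1 < β) (hx : 1 < x) (hxb : x < β) (j : ℕ) :
    useq β x (j + 1) * β ≤ x + (tdigit β 1 : ℝ) * (x - β) * x ^ j := by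
  have hb0 : (0 : ℝ) < β := by linarith
  have hx0 : (0 : ℝ) < x := by linarith
  have hid := key_identity β x (j + 1)
  have h1mem : 1 ∈ Finset.Icc 1 (j + 1) := Finset.mem_Icc.mpr ⟨le_refl _, by omega⟩
  have hsplit : (tdigit β 1 : ℝ) * (x * β) ^ (j + 1 - 1) * (x ^ 1 - β ^ 1)
      + ∑ i ∈ (Finset.Icc 1 (j + 1)).erase 1,
          (tdigit β i : ℝ) * (x * β) ^ (j + 1 - i) * (x ^ i - β ^ i)
      = ∑ i ∈ Finset.Icc 1 (j + 1),
          (tdigit β i : ℝ) * (x * β) ^ (j + 1 - i) * (x ^ i - β ^ i) :=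
    Finset.add_sum_erase (Finset.Icc 1 (j + 1))
      (fun i => (tdigit β i : ℝ) * (x * β) ^ (j + 1 - i) * (x ^ i - β ^ i)) h1mem
  have herase : ∑ i ∈ (Finset.Icc 1 (j + 1)).erase 1,
      (tdigit β i : ℝ) * (x * β) ^ (j + 1 - i) * (x ^ i - β ^ i) ≤ 0 := by
    refine Finset.sum_nonpos fun i hi => ?_
    have h1 : (0 : ℝ) ≤ (tdigit β i : ℝ) := by exact_mod_cast tdigit_nonneg hb0 i
    have h2 : (0 : ℝ) ≤ (x * β) ^ (j + 1 - i) := by positivity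
    have h3 : x ^ i ≤ β ^ i := pow_le_pow_left₀ hx0.le hxb.le i
    exact mul_nonpos_of_nonneg_of_nonpos (mul_nonneg h1 h2) (by linarith)
  have hT : Titer β (j + 1) * x ^ (j + 1) ≤ x ^ (j + 1) := by
    have := Titer_le_one β (j + 1)
    have h0 := Titer_nonneg β (j + 1)
    nlinarith [pow_pos hx0 (j + 1)]
  have hf1 : (tdigit β 1 : ℝ) * (x * β) ^ (j + 1 - 1) * (x ^ 1 - β ^ 1)
      = (tdigit β 1 : ℝ) * (x - β) * x ^ j * β ^ j := by
    simp only [Nat.add_sub_cancel, pow_one, mul_pow]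
    ring
  have hxj : x ^ (j + 1) ≤ x * β ^ j := by
    rw [pow_succ']
    have := pow_le_pow_left₀ hx0.le hxb.le j
    nlinarith
  have hmain : useq β x (j + 1) * β ^ (j + 1)
      ≤ x * β ^ j + (tdigit β 1 : ℝ) * (x - β) * x ^ j * β ^ j := by
    rw [hid, ← hsplit, hf1]
    linarith
  have hpow : useq β x (j + 1) * β ^ (j + 1) = useq β x (j + 1) * β * β ^ j := by
    rw [pow_succ]; ring
  rw [hpow] at hmain
  have hre : x * β ^ j + (tdigit β 1 : ℝ) * (x - β) * x ^ j * β ^ j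
      = (x + (tdigit β 1 : ℝ) * (x - β) * x ^ j) * β ^ j := by ring
  rw [hre] at hmain
  exact le_of_mul_le_mul_right hmain (pow_pos hb0 j)

lemma parry_unique_root {β : ℝ} (hβ : 1 < β) {m p : ℕ}
    (per : ∀ i, m + 1 ≤ i → tdigit β (i + (p + 1)) = tdigit β i)
    {x : ℝ} (hx : 1 < x) (hxβ : x ≠ β) :
    useq β x (m + p + 1) ≠ useq β x m := by
  intro hD
  have hb0 : (0 : ℝ) < β := by linarith
  have hx0 : (0 : ℝ) < x := by linarith
  have ht1 : (1 : ℝ) ≤ (tdigit β 1 : ℝ) := by exact_mod_cast one_le_tdigit_one hβ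
  have hshift : ∀ k, useq β x (m + p + 1 + k) = useq β x (m + k) := by
    intro k
    induction k with
    | zero => simpa using hD
    | succ k ih =>
      have e1 : useq β x (m + p + 1 + (k + 1))
          = x * useq β x (m + p + 1 + k) - tdigit β (m + p + 1 + k + 1) := rfl
      have e2 : useq β x (m + (k + 1))
          = x * useq β x (m + k) - tdigit β (m + k + 1) := rfl
      rw [e1, e2, ih]
      have ht := per (m + k + 1) (by omega)
      rw [show m + p + 1 + k + 1 = m + k + 1 + (p + 1) by omega, ht]
  have hconst : ∀ k, useq β x (m + k * (p + 1)) = useq β x m := by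
    intro k
    induction k with
    | zero => simp
    | succ k ih =>
      rw [show m + (k + 1) * (p + 1) = m + p + 1 + k * (p + 1) by ring, hshift, ih]
  have hmul : 1 ≤ (p + 1) := by omega
  rcases lt_trichotomy x β with hlt | heq | hgt
  · -- 1 < x < β : useq tends to -∞ along constant subsequence
    obtain ⟨n, hn⟩ := pow_unbounded_of_one_lt ((x - useq β x m * β) / (β - x)) hx
    have hk1 : 1 ≤ (n + 1) * (p + 1) := Nat.one_le_iff_ne_zero.mpr (by positivity)
    have hkn : n + 1 ≤ (n + 1) * (p + 1) := Nat.le_mul_of_pos_right _ (by omega)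
    set j : ℕ := m + (n + 1) * (p + 1) - 1 with hj
    have hj1 : j + 1 = m + (n + 1) * (p + 1) := by omega
    have hjn : n ≤ j := by omega
    have hg := grow_lt hβ hx hlt j
    rw [hj1, hconst (n + 1)] at hg
    have hxn : x ^ n ≤ x ^ j := pow_le_pow_right₀ hx.le hjn
    have hd : (x - useq β x m * β) / (β - x) < x ^ j := lt_of_lt_of_le hn hxn
    rw [div_lt_iff₀ (by linarith : (0 : ℝ) < β - x)] at hd
    have hc : (0 : ℝ) < (β - x) * x ^ j := mul_pos (by linarith) (pow_pos hx0 j)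
    have hbig : (β - x) * x ^ j ≤ (tdigit β 1 : ℝ) * (β - x) * x ^ j := by
      calc (β - x) * x ^ j = 1 * ((β - x) * x ^ j) := by ring
        _ ≤ (tdigit β 1 : ℝ) * ((β - x) * x ^ j) := mul_le_mul_of_nonneg_right ht1 hc.le
        _ = (tdigit β 1 : ℝ) * (β - x) * x ^ j := by ring
    nlinarith
  · exact hxβ heq
  · -- x > β : useq tends to +∞
    obtain ⟨n, hn⟩ := pow_unbounded_of_one_lt (useq β x m * β / (x - β)) hx
    have hk1 : 1 ≤ (n + 1) * (p + 1) := Nat.one_le_iff_ne_zero.mpr (by positivity)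
    have hkn : n + 1 ≤ (n + 1) * (p + 1) := Nat.le_mul_of_pos_right _ (by omega)
    set j : ℕ := m + (n + 1) * (p + 1) - 1 with hj
    have hj1 : j + 1 = m + (n + 1) * (p + 1) := by omega
    have hjn : n ≤ j := by omega
    have hg := grow_gt hβ hgt j
    rw [hj1, hconst (n + 1)] at hg
    have hxn : x ^ n ≤ x ^ j := pow_le_pow_right₀ hx.le hjn
    have hd : useq β x m * β / (x - β) < x ^ j := lt_of_lt_of_le hn hxn
    rw [div_lt_iff₀ (by linarith : (0 : ℝ) < x - β)] at hd
    have hc : (0 : ℝ) < (x - β) * x ^ j := mul_pos (by linarith) (pow_pos hx0 j)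
    have hbig : (x - β) * x ^ j ≤ (tdigit β 1 : ℝ) * (x - β) * x ^ j := by
      calc (x - β) * x ^ j = 1 * ((x - β) * x ^ j) := by ring
        _ ≤ (tdigit β 1 : ℝ) * ((x - β) * x ^ j) := mul_le_mul_of_nonneg_right ht1 hc.le
        _ = (tdigit β 1 : ℝ) * (x - β) * x ^ j := by ring
    nlinarith

lemma parrysum_degree_le (β : ℝ) (k N : ℕ) (h : ∀ i, 1 ≤ i → k - i ≤ N) :
    (∑ i ∈ Finset.Icc 1 k, (C (tdigit β i) * X ^ (k - i) : ℤ[X])).degree ≤ (N : ℕ) := by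
  refine (degree_sum_le _ _).trans (Finset.sup_le fun i hi => ?_)
  obtain ⟨h1, h2⟩ := Finset.mem_Icc.mp hi
  exact (degree_C_mul_X_pow_le _ _).trans (Nat.cast_le.mpr (h i h1))

lemma monic_nonsimple (β : ℝ) (m p : ℕ) :
    ((X : ℤ[X]) ^ (m + p + 1)
        - ∑ i ∈ Finset.Icc 1 (m + p + 1), C (tdigit β i) * X ^ (m + p + 1 - i)
        - X ^ m + ∑ i ∈ Finset.Icc 1 m, C (tdigit β i) * X ^ (m - i)).Monic := by
  have hre : ((X : ℤ[X]) ^ (m + p + 1)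
        - ∑ i ∈ Finset.Icc 1 (m + p + 1), C (tdigit β i) * X ^ (m + p + 1 - i)
        - X ^ m + ∑ i ∈ Finset.Icc 1 m, C (tdigit β i) * X ^ (m - i))
      = (X : ℤ[X]) ^ (m + p + 1)
        - ((∑ i ∈ Finset.Icc 1 (m + p + 1), C (tdigit β i) * X ^ (m + p + 1 - i))
            + X ^ m - ∑ i ∈ Finset.Icc 1 m, C (tdigit β i) * X ^ (m - i)) := by
    ring
  rw [hre]
  apply monic_X_pow_sub
  have d1 : (∑ i ∈ Finset.Icc 1 (m + p + 1),
      (C (tdigit β i) * X ^ (m + p + 1 - i) : ℤ[X])).degree ≤ ((m + p : ℕ) : WithBot ℕ) :=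
    parrysum_degree_le β _ _ (fun i hi => by omega)
  have d2 : ((X : ℤ[X]) ^ m).degree ≤ ((m + p : ℕ) : WithBot ℕ) := by
    rw [degree_X_pow]
    exact Nat.cast_le.mpr (by omega)
  have d3 : (∑ i ∈ Finset.Icc 1 m,
      (C (tdigit β i) * X ^ (m - i) : ℤ[X])).degree ≤ ((m + p : ℕ) : WithBot ℕ) :=
    parrysum_degree_le β _ _ (fun i hi => by omega)
  have hlt : ((m + p : ℕ) : WithBot ℕ) < ((m + p + 1 : ℕ) : WithBot ℕ) := by
    exact_mod_cast Nat.lt_succ_self _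
  refine lt_of_le_of_lt ?_ hlt
  exact le_trans (degree_sub_le _ _) (max_le (le_trans (degree_add_le _ _) (max_le d1 d2)) d3)

/-- The Parry polynomial of a simple Parry number with `d_β(1) = 0.t₁…t_m`. -/
def simpleParryPoly (β : ℝ) (m : ℕ) : Polynomial ℤ :=
  X ^ m - ∑ i ∈ Finset.Icc 1 m, C (tdigit β i) * X ^ (m - i)

/-- The Parry polynomial of a non-simple Parry number with preperiod `m`, period `p+1`. -/
def nonsimpleParryPoly (β : ℝ) (m p : ℕ) : Polynomial ℤ :=
  X ^ (m + p + 1) - ∑ i ∈ Finset.Icc 1 (m + p + 1), C (tdigit β i) * X ^ (m + p + 1 - i)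
    - X ^ m + ∑ i ∈ Finset.Icc 1 m, C (tdigit β i) * X ^ (m - i)

/-- `β` is a Parry number (non-integer, `> 1`, with eventually periodic digit sequence
`(t_i)`) and `P` is its Parry polynomial: either `β` is a simple Parry number with
`d_β(1) = 0.t₁…t_m` (`m` maximal with `t_m ≠ 0`), or `β` is a non-simple Parry number with
minimal preperiod length `m ≥ 0` and minimal period length `p+1 ≥ 1`. -/
def IsParryPolyOf (β : ℝ) (P : Polynomial ℤ) : Prop :=
  1 < β ∧ (∀ n : ℤ, (n : ℝ) ≠ β) ∧
  ((∃ m : ℕ, 1 ≤ m ∧ tdigit β m ≠ 0 ∧ (∀ i, m < i → tdigit β i = 0) ∧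
      P = simpleParryPoly β m) ∨
   ((∀ N : ℕ, ∃ i, N < i ∧ tdigit β i ≠ 0) ∧
    ∃ m p : ℕ,
      (∀ i, m + 1 ≤ i → tdigit β (i + (p + 1)) = tdigit β i) ∧
      (∀ q : ℕ, 0 < q → (∃ m', ∀ i, m' + 1 ≤ i → tdigit β (i + q) = tdigit β i) →
        p + 1 ≤ q) ∧
      (∀ m', m' < m → ¬ (∀ i, m' + 1 ≤ i → tdigit β (i + (p + 1)) = tdigit β i)) ∧
      P = nonsimpleParryPoly β m p))

/-- If `χ ∈ (0,1)` is a real root of the Parry polynomial `n*_β` of a Parry number `β`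
which is not a root of the minimal polynomial `P_β`, then the minimal polynomial of `χ`
is non-reciprocal. -/
theorem real_root_in_unit_interval_nonreciprocal (β : ℝ) (P : Polynomial ℤ)
    (hP : IsParryPolyOf β P)
    (χ : ℝ) (h0 : 0 < χ) (h1 : χ < 1)
    (hroot : (Polynomial.aeval χ) P = 0)
    (hmin : (Polynomial.aeval χ) (minpoly ℤ β) ≠ 0) :
    ¬ (minpoly ℤ χ).reverse = minpoly ℤ χ := by
  intro hrec
  obtain ⟨hβ1, -, hcase⟩ := hP
  have hb0 : (0 : ℝ) < β := by linarith
  rcases hcase with ⟨m, hm1, htm, -, hPdef⟩ | ⟨-, m, p, per, -, -, hPdef⟩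
  · -- simple case: P has no root in (0,1) at all
    subst hPdef
    rw [show simpleParryPoly β m
        = (X : ℤ[X]) ^ m - ∑ i ∈ Finset.Icc 1 m, C (tdigit β i) * X ^ (m - i) from rfl,
      aeval_simpleParry, useq_eq] at hroot
    have hmmem : m ∈ Finset.Icc 1 m := Finset.mem_Icc.mpr ⟨hm1, le_refl _⟩
    have hsum : (tdigit β m : ℝ) * χ ^ (m - m)
        ≤ ∑ i ∈ Finset.Icc 1 m, (tdigit β i : ℝ) * χ ^ (m - i) := by
      refine Finset.single_le_sum (f := fun i => (tdigit β i : ℝ) * χ ^ (m - i)) (fun i _ => ?_) hmmem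
      have : (0 : ℝ) ≤ (tdigit β i : ℝ) := by exact_mod_cast tdigit_nonneg hb0 i
      positivity
    have htm1 : (1 : ℝ) ≤ (tdigit β m : ℝ) := by
      have h2 : (1 : ℤ) ≤ tdigit β m := by
        have := tdigit_nonneg hb0 m
        omega
      exact_mod_cast h2
    rw [Nat.sub_self, pow_zero, mul_one] at hsum
    have hχm : χ ^ m < 1 := pow_lt_one₀ h0.le h1 (by omega)
    linarith
  · -- non-simple case
    subst hPdef
    have hPmonic : (nonsimpleParryPoly β m p).Monic := monic_nonsimple β m p
    have hχint : IsIntegral ℤ χ :=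
      ⟨nonsimpleParryPoly β m p, hPmonic, by rwa [← aeval_def]⟩
    have hQχ : (aeval χ) (minpoly ℤ χ) = 0 := minpoly.aeval ℤ χ
    have hQdvd : minpoly ℤ χ ∣ nonsimpleParryPoly β m p :=
      minpoly.isIntegrallyClosed_dvd hχint hroot
    -- the inverse of χ is a root of the minimal polynomial of χ
    letI : Invertible χ := invertibleOfNonzero h0.ne'
    have hQy : (aeval χ⁻¹) (minpoly ℤ χ) = 0 := by
      have h2 := (eval₂_reverse_eq_zero_iff (algebraMap ℤ ℝ) χ (minpoly ℤ χ)).mpr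
        (by rw [← aeval_def]; exact hQχ)
      rw [hrec, invOf_eq_inv] at h2
      rwa [aeval_def]
    have hy1 : 1 < χ⁻¹ := (one_lt_inv₀ h0).mpr h1
    -- χ⁻¹ ≠ β
    have hyβ : χ⁻¹ ≠ β := by
      intro hEq
      have hβroot : (aeval β) (minpoly ℤ χ) = 0 := by rwa [hEq] at hQy
      have hβint : IsIntegral ℤ β := by
        by_contra hni
        rw [minpoly.eq_zero hni] at hmin
        simp at hmin
      obtain ⟨c, hc⟩ := minpoly.isIntegrallyClosed_dvd hβint hβroot
      rcases (minpoly.irreducible hχint).isUnit_or_isUnit hc with hu | hu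
      · exact minpoly.not_isUnit ℤ β hu
      · have hAssoc : Associated (minpoly ℤ β) (minpoly ℤ χ) :=
          ⟨hu.unit, by rw [IsUnit.unit_spec]; exact hc.symm⟩
        have hEq2 := eq_of_monic_of_associated (minpoly.monic hβint) (minpoly.monic hχint) hAssoc
        exact hmin (by rw [hEq2]; exact hQχ)
    -- χ⁻¹ is a root of the Parry polynomial
    have hPy : (aeval χ⁻¹) (nonsimpleParryPoly β m p) = 0 := by
      obtain ⟨R, hR⟩ := hQdvd
      rw [hR, map_mul, hQy, zero_mul]
    rw [show nonsimpleParryPoly β m p = (X : ℤ[X]) ^ (m + p + 1)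
        - ∑ i ∈ Finset.Icc 1 (m + p + 1), C (tdigit β i) * X ^ (m + p + 1 - i)
        - X ^ m + ∑ i ∈ Finset.Icc 1 m, C (tdigit β i) * X ^ (m - i) from rfl,
      aeval_nonsimpleParry] at hPy
    exact parry_unique_root hβ1 per hy1 hyβ (by linarith)

end
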